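/- arXiv:2502.21083 — 3 statements merged into one kernel-verified Lean document; each statement's English description precedes it below -/
import Mathlib

section
/- For each n let γ_n be a coupling of a graph model RG_n (a PMF on simple graphs on Fin n) and a digraph model RD_n (a PMF on simple digraphs on Fin n), and let Ξ_n be the total number of coupling errors under γ_n. Let (r_n)_{n≥1} be a sequence of natural numbers such that P(Ξ_n ≤ r_n) → 1 as n → ∞, and suppose the sequence of events (Q_n)_{n≥1} is completely insensitive at rate r_n. Then P(RG_n ∈ Q_n) − P(RD_n ∈ 𝒰⁻¹(Q_n)) → 0 as n → ∞. -/
/-- A simple digraph on `Fin n`: an irreflexive Bool-valued relation. -/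
abbrev DigraphOn (n : ℕ) := {A : Fin n → Fin n → Bool // ∀ v, A v v = false}

/-- A simple graph on `Fin n`: an irreflexive symmetric Bool-valued relation. -/
abbrev GraphOn (n : ℕ) :=
  {A : Fin n → Fin n → Bool // (∀ v, A v v = false) ∧ ∀ v w, A v w = A w v}

/-- The forgetful map `𝒰`. -/
def forget {n : ℕ} (D : DigraphOn n) : GraphOn n :=
  ⟨fun v w => D.1 v w || D.1 w v, by
    refine ⟨fun v => ?_, fun v w => ?_⟩
    · simp [D.2]
    · exact Bool.or_comm _ _⟩

/-- `P(μ ∈ Q)`, the probability a PMF assigns to an event `Q`. -/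
noncomputable def probOf {α : Type*} (μ : PMF α) (Q : Set α) : ℝ :=
  (∑' x : Q, μ x.1).toReal

/-- `G` is a subgraph of `H`. -/
def GraphLE {n : ℕ} (G H : GraphOn n) : Prop :=
  ∀ v w, G.1 v w = true → H.1 v w = true

/-- The number of (unordered) edges of `H` that are not edges of `G`. -/
def addedEdges {n : ℕ} (G H : GraphOn n) : ℕ :=
  (Finset.univ.filter fun q : Fin n × Fin n =>
    q.1 < q.2 ∧ H.1 q.1 q.2 = true ∧ G.1 q.1 q.2 = false).card

/-- `Ξ⁽¹⁾`: the number of unordered pairs `{v,w}` that form an edge of `G` while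
neither `(v,w)` nor `(w,v)` is an arc of `D`. -/
def xi1 {n : ℕ} (G : GraphOn n) (D : DigraphOn n) : ℕ :=
  (Finset.univ.filter fun q : Fin n × Fin n =>
    q.1 < q.2 ∧ G.1 q.1 q.2 = true ∧ D.1 q.1 q.2 = false ∧ D.1 q.2 q.1 = false).card

/-- `Ξ⁽²⁾`: the number of unordered pairs `{v,w}` such that `(v,w)` or `(w,v)` is
an arc of `D` while `{v,w}` is not an edge of `G`. -/
def xi2 {n : ℕ} (G : GraphOn n) (D : DigraphOn n) : ℕ :=
  (Finset.univ.filter fun q : Fin n × Fin n =>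
    q.1 < q.2 ∧ (D.1 q.1 q.2 = true ∨ D.1 q.2 q.1 = true) ∧ G.1 q.1 q.2 = false).card

/-- The total number of location coupling errors `Ξ = Ξ⁽¹⁾ + Ξ⁽²⁾`. -/
def xi {n : ℕ} (G : GraphOn n) (D : DigraphOn n) : ℕ := xi1 G D + xi2 G D

/-- `(Q_n)` is insensitive for increase at rate `r_n`: for every sequence of
couplings `(X_n, Y_n)` such that almost surely `X_n ⊆ Y_n` and `Y_n` has at most
`r_n` edges not in `X_n`, one has `P(X_n ∈ Q_n) − P(Y_n ∈ Q_n) → 0`. -/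
def InsensitiveIncr (Q : ∀ n : ℕ, Set (GraphOn n)) (r : ℕ → ℕ) : Prop :=
  ∀ γ : ∀ n : ℕ, PMF (GraphOn n × GraphOn n),
    (∀ n, probOf (γ n) {xy | GraphLE xy.1 xy.2 ∧ addedEdges xy.1 xy.2 ≤ r n} = 1) →
    Filter.Tendsto
      (fun n => probOf ((γ n).map Prod.fst) (Q n) - probOf ((γ n).map Prod.snd) (Q n))
      Filter.atTop (nhds 0)

/-- `(Q_n)` is insensitive for decrease at rate `r_n`: for every sequence of
couplings `(Y_n, X_n)` such that almost surely `X_n` is obtained from `Y_n` by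
removing at most `r_n` edges, one has `P(Y_n ∈ Q_n) − P(X_n ∈ Q_n) → 0`. -/
def InsensitiveDecr (Q : ∀ n : ℕ, Set (GraphOn n)) (r : ℕ → ℕ) : Prop :=
  ∀ γ : ∀ n : ℕ, PMF (GraphOn n × GraphOn n),
    (∀ n, probOf (γ n) {yx | GraphLE yx.2 yx.1 ∧ addedEdges yx.2 yx.1 ≤ r n} = 1) →
    Filter.Tendsto
      (fun n => probOf ((γ n).map Prod.fst) (Q n) - probOf ((γ n).map Prod.snd) (Q n))
      Filter.atTop (nhds 0)

/-- `(Q_n)` is completely insensitive at rate `r_n`. -/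
def CompletelyInsensitive (Q : ∀ n : ℕ, Set (GraphOn n)) (r : ℕ → ℕ) : Prop :=
  InsensitiveIncr Q r ∧ InsensitiveDecr Q r

/-!
On the event `Ξ ≤ r`, the graph `I = G ⊓ 𝒰(D)` arises from `G` by deleting `Ξ⁽¹⁾ ≤ r` edges and
from `𝒰(D)` by deleting `Ξ⁽²⁾ ≤ r` edges. Replacing `I` by `G`, resp. by `𝒰(D)`, off that event
yields couplings `(I_G, G)` and `(𝒰(D), I_D)` to which insensitivity for increase and for decrease
apply. Since `I_G` and `I_D` agree on `Ξ ≤ r`, their laws differ by at most `P(Ξ > r) → 0`.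
-/

section Probability

variable {α β : Type*}

lemma probOf_eq_toReal_toOuterMeasure (μ : PMF α) (S : Set α) :
    probOf μ S = (μ.toOuterMeasure S).toReal := by
  rw [probOf, PMF.toOuterMeasure_apply, ← tsum_subtype]

lemma PMF.toOuterMeasure_ne_top (μ : PMF α) (S : Set α) : μ.toOuterMeasure S ≠ ⊤ := by
  rw [PMF.toOuterMeasure_apply]
  exact μ.tsum_coe_indicator_ne_top S

lemma probOf_map (μ : PMF α) (f : α → β) (S : Set β) :
    probOf (μ.map f) S = probOf μ (f ⁻¹' S) := by
  rw [probOf_eq_toReal_toOuterMeasure, probOf_eq_toReal_toOuterMeasure,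
    PMF.toOuterMeasure_map_apply]

lemma probOf_eq_one_of_forall_mem (μ : PMF α) {S : Set α} (h : ∀ x, x ∈ S) :
    probOf μ S = 1 := by
  rw [probOf_eq_toReal_toOuterMeasure,
    (μ.toOuterMeasure_apply_eq_one_iff S).2 fun x _ => h x, ENNReal.toReal_one]

lemma PMF.toOuterMeasure_add_compl (μ : PMF α) (S : Set α) :
    μ.toOuterMeasure S + μ.toOuterMeasure Sᶜ = 1 := by
  rw [PMF.toOuterMeasure_apply, PMF.toOuterMeasure_apply, ← ENNReal.tsum_add,
    ← μ.tsum_coe]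
  exact tsum_congr fun x => congrFun (Set.indicator_self_add_compl S μ) x

lemma probOf_compl (μ : PMF α) (S : Set α) : probOf μ Sᶜ = 1 - probOf μ S := by
  have h := congrArg ENNReal.toReal (μ.toOuterMeasure_add_compl S)
  rw [ENNReal.toReal_add (μ.toOuterMeasure_ne_top S) (μ.toOuterMeasure_ne_top Sᶜ),
    ENNReal.toReal_one] at h
  rw [probOf_eq_toReal_toOuterMeasure, probOf_eq_toReal_toOuterMeasure]
  linarith

lemma probOf_le_add_probOf_compl (μ : PMF α) {A B S : Set α} (h : A ∩ S ⊆ B) :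
    probOf μ A ≤ probOf μ B + probOf μ Sᶜ := by
  have hle : μ.toOuterMeasure A ≤ μ.toOuterMeasure B + μ.toOuterMeasure Sᶜ :=
    calc μ.toOuterMeasure A ≤ μ.toOuterMeasure (B ∪ Sᶜ) :=
          μ.toOuterMeasure.mono fun x hx => (em (x ∈ S)).imp (fun hS => h ⟨hx, hS⟩) id
      _ ≤ μ.toOuterMeasure B + μ.toOuterMeasure Sᶜ := MeasureTheory.measure_union_le B Sᶜ
  simp only [probOf_eq_toReal_toOuterMeasure]
  rw [← ENNReal.toReal_add (μ.toOuterMeasure_ne_top B) (μ.toOuterMeasure_ne_top Sᶜ)]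
  exact ENNReal.toReal_mono
    (ENNReal.add_ne_top.2 ⟨μ.toOuterMeasure_ne_top B, μ.toOuterMeasure_ne_top Sᶜ⟩) hle

lemma abs_probOf_map_sub_probOf_map_le (μ : PMF α) {f g : α → β} (S : Set α)
    (h : ∀ x ∈ S, f x = g x) (Q : Set β) :
    |probOf (μ.map f) Q - probOf (μ.map g) Q| ≤ probOf μ Sᶜ := by
  rw [probOf_map, probOf_map, abs_sub_le_iff, sub_le_iff_le_add, sub_le_iff_le_add, add_comm,
    add_comm (probOf μ Sᶜ)]
  constructor <;> apply probOf_le_add_probOf_compl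
  · exact fun x ⟨hx, hS⟩ => by simpa [Set.mem_preimage, h x hS] using hx
  · exact fun x ⟨hx, hS⟩ => by simpa [Set.mem_preimage, ← h x hS] using hx

end Probability

section Graphs

variable {n : ℕ}

def graphInf (G H : GraphOn n) : GraphOn n :=
  ⟨fun v w => G.1 v w && H.1 v w, fun v => by simp [G.2.1 v],
    fun v w => by simp only [G.2.2 v w, H.2.2 v w]⟩

lemma graphLE_refl (G : GraphOn n) : GraphLE G G := fun _ _ h => h

lemma graphLE_graphInf_left (G H : GraphOn n) : GraphLE (graphInf G H) G :=
  fun _ _ h => (Bool.and_eq_true _ _ ▸ h).1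

lemma graphLE_graphInf_right (G H : GraphOn n) : GraphLE (graphInf G H) H :=
  fun _ _ h => (Bool.and_eq_true _ _ ▸ h).2

lemma addedEdges_self (G : GraphOn n) : addedEdges G G = 0 := by
  rw [addedEdges, Finset.card_eq_zero, Finset.filter_eq_empty_iff]
  rintro q - ⟨-, hH, hG⟩
  simp [hH] at hG

lemma addedEdges_graphInf_forget_left (G : GraphOn n) (D : DigraphOn n) :
    addedEdges (graphInf G (forget D)) G = xi1 G D := by
  unfold addedEdges xi1
  congr 1
  refine Finset.filter_congr fun q _ => ?_
  simp only [graphInf, forget]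
  cases G.1 q.1 q.2 <;> cases D.1 q.1 q.2 <;> cases D.1 q.2 q.1 <;> simp

lemma addedEdges_graphInf_forget_right (G : GraphOn n) (D : DigraphOn n) :
    addedEdges (graphInf G (forget D)) (forget D) = xi2 G D := by
  unfold addedEdges xi2
  congr 1
  refine Finset.filter_congr fun q _ => ?_
  simp only [graphInf, forget]
  cases G.1 q.1 q.2 <;> cases D.1 q.1 q.2 <;> cases D.1 q.2 q.1 <;> simp

end Graphs

section Couplings

variable {n : ℕ}

def commonEdgesOr (r : ℕ) (H G : GraphOn n) (D : DigraphOn n) : GraphOn n :=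
  if xi G D ≤ r then graphInf G (forget D) else H

lemma commonEdgesOr_of_xi_le {r : ℕ} (H : GraphOn n) {G : GraphOn n} {D : DigraphOn n}
    (h : xi G D ≤ r) : commonEdgesOr r H G D = graphInf G (forget D) :=
  if_pos h

lemma graphLE_commonEdgesOr_and_addedEdges_le (r : ℕ) {H G : GraphOn n} {D : DigraphOn n}
    (hle : GraphLE (graphInf G (forget D)) H)
    (hadded : addedEdges (graphInf G (forget D)) H ≤ xi G D) :
    GraphLE (commonEdgesOr r H G D) H ∧ addedEdges (commonEdgesOr r H G D) H ≤ r := by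
  unfold commonEdgesOr
  split_ifs with hxi
  · exact ⟨hle, hadded.trans hxi⟩
  · exact ⟨graphLE_refl H, (addedEdges_self H).trans_le (Nat.zero_le r)⟩

noncomputable def incrCoupling (r : ℕ) (γ : PMF (GraphOn n × DigraphOn n)) :
    PMF (GraphOn n × GraphOn n) :=
  γ.map fun gd => (commonEdgesOr r gd.1 gd.1 gd.2, gd.1)

noncomputable def decrCoupling (r : ℕ) (γ : PMF (GraphOn n × DigraphOn n)) :
    PMF (GraphOn n × GraphOn n) :=
  γ.map fun gd => (forget gd.2, commonEdgesOr r (forget gd.2) gd.1 gd.2)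

lemma incrCoupling_map_snd (r : ℕ) (γ : PMF (GraphOn n × DigraphOn n)) :
    (incrCoupling r γ).map Prod.snd = γ.map Prod.fst :=
  PMF.map_comp _ _ _

lemma decrCoupling_map_fst (r : ℕ) (γ : PMF (GraphOn n × DigraphOn n)) :
    (decrCoupling r γ).map Prod.fst = (γ.map Prod.snd).map forget := by
  rw [decrCoupling, PMF.map_comp, PMF.map_comp]
  rfl

lemma probOf_incrCoupling (r : ℕ) (γ : PMF (GraphOn n × DigraphOn n)) :
    probOf (incrCoupling r γ) {xy | GraphLE xy.1 xy.2 ∧ addedEdges xy.1 xy.2 ≤ r} = 1 := by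
  rw [incrCoupling, probOf_map]
  exact probOf_eq_one_of_forall_mem γ fun gd =>
    graphLE_commonEdgesOr_and_addedEdges_le r (graphLE_graphInf_left _ _)
      ((addedEdges_graphInf_forget_left _ _).trans_le (Nat.le_add_right _ _))

lemma probOf_decrCoupling (r : ℕ) (γ : PMF (GraphOn n × DigraphOn n)) :
    probOf (decrCoupling r γ) {yx | GraphLE yx.2 yx.1 ∧ addedEdges yx.2 yx.1 ≤ r} = 1 := by
  rw [decrCoupling, probOf_map]
  exact probOf_eq_one_of_forall_mem γ fun gd =>
    graphLE_commonEdgesOr_and_addedEdges_le r (graphLE_graphInf_right _ _)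
      ((addedEdges_graphInf_forget_right _ _).trans_le (Nat.le_add_left _ _))

lemma abs_probOf_incrCoupling_sub_decrCoupling_le (r : ℕ) (γ : PMF (GraphOn n × DigraphOn n))
    (Q : Set (GraphOn n)) :
    |probOf ((incrCoupling r γ).map Prod.fst) Q - probOf ((decrCoupling r γ).map Prod.snd) Q|
      ≤ probOf γ {gd | xi gd.1 gd.2 ≤ r}ᶜ := by
  rw [incrCoupling, decrCoupling, PMF.map_comp, PMF.map_comp]
  exact abs_probOf_map_sub_probOf_map_le γ _ (fun gd hgd =>
    (commonEdgesOr_of_xi_le _ hgd).trans (commonEdgesOr_of_xi_le _ hgd).symm) Q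

end Couplings

/-- Approximate location coupling: if `γ_n` couples `RG_n` and `RD_n`, the number
of coupling errors satisfies `P(Ξ_n ≤ r_n) → 1`, and `(Q_n)` is completely
insensitive at rate `r_n`, then `P(RG_n ∈ Q_n) − P(RD_n ∈ 𝒰⁻¹(Q_n)) → 0`. -/
theorem approximate_location_coupling
    (RG : ∀ n : ℕ, PMF (GraphOn n)) (RD : ∀ n : ℕ, PMF (DigraphOn n))
    (γ : ∀ n : ℕ, PMF (GraphOn n × DigraphOn n))
    (hfst : ∀ n, (γ n).map Prod.fst = RG n)
    (hsnd : ∀ n, (γ n).map Prod.snd = RD n)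
    (r : ℕ → ℕ)
    (hxi : Filter.Tendsto (fun n => probOf (γ n) {gd | xi gd.1 gd.2 ≤ r n})
      Filter.atTop (nhds 1))
    (Q : ∀ n : ℕ, Set (GraphOn n))
    (hQ : CompletelyInsensitive Q r) :
    Filter.Tendsto
      (fun n => probOf (RG n) (Q n) - probOf (RD n) (forget ⁻¹' (Q n)))
      Filter.atTop (nhds 0) := by
  have hincr := hQ.1 (fun n => incrCoupling (r n) (γ n)) fun n => probOf_incrCoupling _ _
  have hdecr := hQ.2 (fun n => decrCoupling (r n) (γ n)) fun n => probOf_decrCoupling _ _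
  have hbad : Filter.Tendsto (fun n => probOf (γ n) {gd | xi gd.1 gd.2 ≤ r n}ᶜ)
      Filter.atTop (nhds 0) := by
    simp_rw [probOf_compl]
    simpa using (tendsto_const_nhds (x := (1 : ℝ))).sub hxi
  have hmiddle := squeeze_zero_norm (fun n => (Real.norm_eq_abs _).trans_le
    (abs_probOf_incrCoupling_sub_decrCoupling_le (r n) (γ n) (Q n))) hbad
  have hsum := (hmiddle.sub hincr).sub hdecr
  simp only [sub_zero] at hsum
  refine hsum.congr fun n => ?_
  rw [incrCoupling_map_snd, decrCoupling_map_fst, hfst, hsnd, probOf_map (RD n) forget]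
  ring
end

section
/- Fix n ≥ 1, a countable type set 𝒱, a probability mass function τ on type vectors t : Fin n → 𝒱, and a function π : 𝒱 × 𝒱 → [0,1]. Define π' : 𝒱 × 𝒱 → [0,1] by π'(a,b) = 1 − (1 − π(a,b))(1 − π(b,a)). Then the pushforward under the forgetful map 𝒰 of the independent arc graph model IAG_n(τ, π) equals the independent edge graph model IEG_n(τ, π') as probability mass functions on simple graphs on Fin n: Φ(IAG_n(τ, π)) = IEG_n(τ, π'). -/
/-- The mass that the independent arc graph model `IAG_n(τ, π)` assigns to a
simple digraph `D`: sample a type vector `t ∼ τ`, then include each arc `(v,w)`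
(`v ≠ w`) independently with probability `π (t v) (t w)`. -/
noncomputable def iagMass {n : ℕ} {V : Type*} (τ : PMF (Fin n → V))
    (π : V → V → ℝ) (D : DigraphOn n) : ℝ :=
  ∑' t : Fin n → V, (τ t).toReal *
    ∏ q ∈ Finset.univ.filter (fun q : Fin n × Fin n => q.1 ≠ q.2),
      (if D.1 q.1 q.2 = true then π (t q.1) (t q.2) else 1 - π (t q.1) (t q.2))

/-- The mass that the independent edge graph model `IEG_n(τ, π)` assigns to a
simple graph `G`: sample a type vector `t ∼ τ`, then include each edge `{v,w}`
(`v < w`) independently with probability `π (t v) (t w)`. -/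
noncomputable def iegMass {n : ℕ} {V : Type*} (τ : PMF (Fin n → V))
    (π : V → V → ℝ) (G : GraphOn n) : ℝ :=
  ∑' t : Fin n → V, (τ t).toReal *
    ∏ q ∈ Finset.univ.filter (fun q : Fin n × Fin n => q.1 < q.2),
      (if G.1 q.1 q.2 = true then π (t q.1) (t q.2) else 1 - π (t q.1) (t q.2))

def bernWeight {R : Type*} [Ring R] (p : R) (b : Bool) : R :=
  if b = true then p else 1 - p

lemma bernWeight_nonneg {p : ℝ} (h0 : 0 ≤ p) (h1 : p ≤ 1) (b : Bool) :
    0 ≤ bernWeight p b := by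
  unfold bernWeight; split <;> linarith

lemma bernWeight_le_one {p : ℝ} (h0 : 0 ≤ p) (h1 : p ≤ 1) (b : Bool) :
    bernWeight p b ≤ 1 := by
  unfold bernWeight; split <;> linarith

lemma sum_bernWeight_mul_bernWeight_of_or_eq {R : Type*} [CommRing R] (x y : R) (g : Bool) :
    ∑ ab ∈ Finset.univ.filter (fun ab : Bool × Bool => (ab.1 || ab.2) = g),
        bernWeight x ab.1 * bernWeight y ab.2
      = bernWeight (1 - (1 - x) * (1 - y)) g := by
  cases g
  · simp [Finset.sum_filter, Fintype.sum_prod_type, bernWeight]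
  · simp only [Bool.or_eq_true, bernWeight, mul_ite, ite_mul, Finset.sum_filter,
      Fintype.sum_prod_type, Fintype.univ_bool, Finset.mem_singleton, Bool.true_eq_false,
      not_false_eq_true, Finset.sum_insert, or_true, ↓reduceIte, Finset.sum_singleton,
      Bool.false_eq_true, or_false, add_zero]
    ring

lemma PMF.summable_toReal_mul {α : Type*} (τ : PMF α) {f : α → ℝ}
    (h0 : ∀ a, 0 ≤ f a) (h1 : ∀ a, f a ≤ 1) :
    Summable fun a => (τ a).toReal * f a :=
  (ENNReal.summable_toReal (τ.tsum_coe ▸ ENNReal.one_ne_top)).of_nonneg_of_le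
    (fun a => mul_nonneg ENNReal.toReal_nonneg (h0 a))
    (fun a => mul_le_of_le_one_right ENNReal.toReal_nonneg (h1 a))

lemma Finset.prod_filter_ne_eq_prod_filter_lt_mul_swap {n : ℕ} {M : Type*} [CommMonoid M]
    (w : Fin n × Fin n → M) :
    ∏ q ∈ Finset.univ.filter (fun q : Fin n × Fin n => q.1 ≠ q.2), w q
      = ∏ q ∈ Finset.univ.filter (fun q : Fin n × Fin n => q.1 < q.2), w q * w q.swap := by
  have hsplit : Finset.univ.filter (fun q : Fin n × Fin n => q.1 ≠ q.2)
      = Finset.univ.filter (fun q : Fin n × Fin n => q.1 < q.2) ∪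
        Finset.univ.filter (fun q : Fin n × Fin n => q.2 < q.1) := by
    ext q
    simp only [Finset.mem_filter, Finset.mem_union, Finset.mem_univ, true_and]
    exact ne_iff_lt_or_gt
  have hdisj : Disjoint (Finset.univ.filter (fun q : Fin n × Fin n => q.1 < q.2))
      (Finset.univ.filter (fun q : Fin n × Fin n => q.2 < q.1)) :=
    Finset.disjoint_filter.2 fun q _ h => h.asymm
  rw [hsplit, Finset.prod_union hdisj, Finset.prod_mul_distrib]
  congr 1
  exact Finset.prod_nbij' Prod.swap Prod.swap (by simp) (by simp) (by simp) (by simp)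
    (by simp)

/-- The pairs `v < w`, i.e. the unordered pairs of distinct vertices. -/
abbrev LtPair (n : ℕ) := {q : Fin n × Fin n // q.1 < q.2}

lemma GraphOn.ext_of_lt {n : ℕ} {G H : GraphOn n} (h : ∀ v w, v < w → G.1 v w = H.1 v w) :
    G = H := by
  ext v w
  rcases lt_trichotomy v w with hvw | rfl | hvw
  · exact h v w hvw
  · rw [G.2.1, H.2.1]
  · rw [G.2.2, H.2.2, h w v hvw]

namespace DigraphOn

variable {n : ℕ}

def equivLtPair : DigraphOn n ≃ (LtPair n → Bool × Bool) where
  toFun D p := (D.1 p.1.1 p.1.2, D.1 p.1.2 p.1.1)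
  invFun f := ⟨fun v w =>
    if h : v < w then (f ⟨(v, w), h⟩).1
    else if h' : w < v then (f ⟨(w, v), h'⟩).2
    else false, fun v => by simp⟩
  left_inv D := by
    ext v w
    rcases lt_trichotomy v w with h | rfl | h
    · simp [h]
    · simp [D.2 v]
    · simp [h, h.not_gt]
  right_inv f := by
    funext p
    simp [p.2, p.2.not_gt]

lemma forget_eq_iff (D : DigraphOn n) (G : GraphOn n) :
    forget D = G ↔
      ∀ p : LtPair n, ((equivLtPair D p).1 || (equivLtPair D p).2) = G.1 p.1.1 p.1.2 :=
  ⟨fun h _ => h ▸ rfl, fun h => GraphOn.ext_of_lt fun v w hvw => h ⟨(v, w), hvw⟩⟩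

/-- `forget D = G` constrains each pair of opposite arcs separately. -/
lemma sum_forget_eq_prod_sum {R : Type*} [CommSemiring R] (w : Fin n × Fin n → Bool → R)
    (G : GraphOn n) :
    ∑ D ∈ Finset.univ.filter (fun D : DigraphOn n => forget D = G),
        ∏ q ∈ Finset.univ.filter (fun q : Fin n × Fin n => q.1 ≠ q.2), w q (D.1 q.1 q.2)
      = ∏ q ∈ Finset.univ.filter (fun q : Fin n × Fin n => q.1 < q.2),
          ∑ ab ∈ Finset.univ.filter (fun ab : Bool × Bool => (ab.1 || ab.2) = G.1 q.1 q.2),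
            w q ab.1 * w q.swap ab.2 := by
  have hlt : ∀ q : Fin n × Fin n, q ∈ Finset.univ.filter (fun q => q.1 < q.2) ↔ q.1 < q.2 := by
    simp
  let allowed (p : LtPair n) : Finset (Bool × Bool) :=
    Finset.univ.filter fun ab => (ab.1 || ab.2) = G.1 p.1.1 p.1.2
  calc _ = ∑ f ∈ Fintype.piFinset allowed, ∏ p : LtPair n, w p (f p).1 * w p.1.swap (f p).2 := by
        refine Finset.sum_equiv equivLtPair (fun D => ?_) (fun D _ => ?_)
        · simp only [Finset.mem_filter, Finset.mem_univ, true_and, Fintype.mem_piFinset, allowed,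
            forget_eq_iff]
        · rw [Finset.prod_filter_ne_eq_prod_filter_lt_mul_swap, Finset.prod_subtype _ hlt]
          rfl
    _ = ∏ p : LtPair n, ∑ ab ∈ allowed p, w p ab.1 * w p.1.swap ab.2 :=
        (Finset.prod_univ_sum allowed fun p ab => w p ab.1 * w p.1.swap ab.2).symm
    _ = _ := by rw [Finset.prod_subtype _ hlt]

end DigraphOn

theorem forgetful_iag_eq_ieg_general (n : ℕ) {V : Type*}
    (τ : PMF (Fin n → V)) (π : V → V → ℝ)
    (hπ0 : ∀ a b, 0 ≤ π a b) (hπ1 : ∀ a b, π a b ≤ 1) :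
    ∀ G : GraphOn n,
      ∑ D ∈ Finset.univ.filter (fun D : DigraphOn n => forget D = G),
          iagMass τ π D
        = iegMass τ (fun a b => 1 - (1 - π a b) * (1 - π b a)) G := by
  intro G
  have hsummable (D : DigraphOn n) : Summable fun t : Fin n → V => (τ t).toReal *
      ∏ q ∈ Finset.univ.filter (fun q : Fin n × Fin n => q.1 ≠ q.2),
        bernWeight (π (t q.1) (t q.2)) (D.1 q.1 q.2) :=
    τ.summable_toReal_mul
      (fun t => Finset.prod_nonneg fun q _ => bernWeight_nonneg (hπ0 _ _) (hπ1 _ _) _)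
      (fun t => Finset.prod_le_one (fun q _ => bernWeight_nonneg (hπ0 _ _) (hπ1 _ _) _)
        fun q _ => bernWeight_le_one (hπ0 _ _) (hπ1 _ _) _)
  -- the factors of `iagMass` and `iegMass` are `bernWeight`s up to unfolding
  refine (Summable.tsum_finsetSum fun D _ => hsummable D).symm.trans (tsum_congr fun t => ?_)
  rw [← Finset.mul_sum]
  congr 1
  exact (DigraphOn.sum_forget_eq_prod_sum (fun q => bernWeight (π (t q.1) (t q.2))) G).trans
    (Finset.prod_congr rfl fun q _ => sum_bernWeight_mul_bernWeight_of_or_eq _ _ _)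

/-- Exact `IAG` to `IEG`: the pushforward under the forgetful map of
`IAG_n(τ, π)` equals `IEG_n(τ, π')` with
`π'(a,b) = 1 − (1 − π(a,b))(1 − π(b,a))`; that is, for every simple graph `G`,
`Φ(IAG_n(τ, π))(G) = ∑_{D : 𝒰(D) = G} IAG_n(τ, π)(D) = IEG_n(τ, π')(G)`. -/
theorem forgetful_iag_eq_ieg (n : ℕ) (hn : 1 ≤ n) {V : Type*} [Countable V]
    (τ : PMF (Fin n → V)) (π : V → V → ℝ)
    (hπ0 : ∀ a b, 0 ≤ π a b) (hπ1 : ∀ a b, π a b ≤ 1) :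
    ∀ G : GraphOn n,
      ∑ D ∈ Finset.univ.filter (fun D : DigraphOn n => forget D = G),
          iagMass τ π D
        = iegMass τ (fun a b => 1 - (1 - π a b) * (1 - π b a)) G :=
  forgetful_iag_eq_ieg_general n τ π hπ0 hπ1
end

section
/- Let (Ω, ℱ, P) be a probability space with a filtration (ℱ_s)_{s=0}^m, let f be a real number with f > m + 2, and let (Ψ_s)_{s=0}^m be an adapted ℕ-valued process with Ψ_0 = 0 and Ψ_{s+1} − Ψ_s ∈ {0,1} almost surely for each 0 ≤ s < m. Suppose that for each 0 ≤ s < m, E[Ψ_{s+1} − Ψ_s | ℱ_s] ≤ (s − 2Ψ_s)/(f − s) almost surely. Define a_i = i/(f − i) and b_i = 1 − 2/(f − i) for 1 ≤ i ≤ m, and set M_s = ( Ψ_s − Σ_{i=1}^s a_i Π_{j=i+1}^s b_j ) / Π_{i=1}^s b_i for 0 ≤ s ≤ m. Then (M_s)_{s=0}^m is a supermartingale with respect to (ℱ_s)_{s=0}^m: E[M_{s+1} | ℱ_s] ≤ M_s almost surely for each 0 ≤ s < m. -/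
/-!
With `y = Ψ_s` and `d = E[Ψ_{s+1} − Ψ_s | ℱ_s] ≥ 0`, the drift hypothesis forces `2y ≤ s`, so the
bound `(s − 2y)/(f − s)` on `d` weakens to `(s + 1 − 2y)/(f − s − 1) = a_{s+1} − (1 − b_{s+1}) y`.
Hence `E[Ψ_{s+1} | ℱ_s] ≤ a_{s+1} + b_{s+1} Ψ_s`, and the affine normalisation defining `M` is
chosen exactly so that this becomes `E[M_{s+1} | ℱ_s] ≤ M_s`, because
`∑_{i ≤ s+1} a_i ∏_{i<j≤s+1} b_j = a_{s+1} + b_{s+1} ∑_{i ≤ s} a_i ∏_{i<j≤s} b_j`.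
-/

open MeasureTheory

/-- The normalised error process
`M_s = (Ψ_s − ∑_{i=1}^s a_i ∏_{j=i+1}^s b_j) / ∏_{i=1}^s b_i`,
where `a_i = i/(f−i)` and `b_i = 1 − 2/(f−i)`. -/
noncomputable def Mproc {Ω : Type*} (f : ℝ) (Ψ : ℕ → Ω → ℕ) (s : ℕ) (ω : Ω) : ℝ :=
  ((Ψ s ω : ℝ) -
      ∑ i ∈ Finset.Icc 1 s, ((i : ℝ) / (f - (i : ℝ))) *
        ∏ j ∈ Finset.Icc (i + 1) s, (1 - 2 / (f - (j : ℝ)))) /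
    ∏ i ∈ Finset.Icc 1 s, (1 - 2 / (f - (i : ℝ)))

open Finset

noncomputable def bProd (f : ℝ) (s : ℕ) : ℝ :=
  ∏ i ∈ Icc 1 s, (1 - 2 / (f - (i : ℝ)))

noncomputable def abSum (f : ℝ) (s : ℕ) : ℝ :=
  ∑ i ∈ Icc 1 s, ((i : ℝ) / (f - (i : ℝ))) * ∏ j ∈ Icc (i + 1) s, (1 - 2 / (f - (j : ℝ)))

lemma Mproc_eq {Ω : Type*} (f : ℝ) (Ψ : ℕ → Ω → ℕ) (s : ℕ) :
    Mproc f Ψ s = fun ω => ((Ψ s ω : ℝ) - abSum f s) / bProd f s := rfl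

lemma bProd_succ (f : ℝ) (s : ℕ) :
    bProd f (s + 1) = (1 - 2 / (f - (s + 1))) * bProd f s := by
  rw [bProd, prod_Icc_succ_top (by omega), mul_comm, bProd]
  push_cast; rfl

lemma abSum_succ (f : ℝ) (s : ℕ) :
    abSum f (s + 1) = (s + 1) / (f - (s + 1)) + (1 - 2 / (f - (s + 1))) * abSum f s := by
  have hprod : ∀ i ∈ Icc 1 s, ∏ j ∈ Icc (i + 1) (s + 1), (1 - 2 / (f - (j : ℝ))) =
      (1 - 2 / (f - (s + 1))) * ∏ j ∈ Icc (i + 1) s, (1 - 2 / (f - (j : ℝ))) := by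
    intro i hi
    rw [prod_Icc_succ_top (by simp at hi; omega), mul_comm]
    push_cast; rfl
  rw [abSum, sum_Icc_succ_top (by omega), Icc_eq_empty (show ¬s + 1 + 1 ≤ s + 1 by omega),
    prod_empty, mul_one,
    sum_congr rfl fun i hi => by rw [hprod i hi, mul_left_comm], ← mul_sum, abSum]
  push_cast; ring

lemma one_sub_two_div_pos {f x : ℝ} (h : x + 2 < f) : 0 < 1 - 2 / (f - x) := by
  rw [sub_pos, div_lt_one (by linarith)]; linarith

lemma bProd_pos {f : ℝ} {s : ℕ} (h : (s : ℝ) + 2 < f) : 0 < bProd f s := by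
  refine prod_pos fun i hi => one_sub_two_div_pos ?_
  have : (i : ℝ) ≤ s := by exact_mod_cast (mem_Icc.mp hi).2
  linarith

lemma add_le_of_drift_le {f s y d : ℝ} (hf : s + 1 < f) (hd₀ : 0 ≤ d)
    (hd : d ≤ (s - 2 * y) / (f - s)) :
    y + d ≤ (s + 1) / (f - (s + 1)) + (1 - 2 / (f - (s + 1))) * y := by
  have hpos : 0 < f - (s + 1) := by linarith
  have hy : 0 ≤ s - 2 * y := by
    by_contra! h
    exact absurd (hd₀.trans hd) (not_le.mpr (div_neg_of_neg_of_pos h (by linarith)))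
  have hweaken : (s - 2 * y) / (f - s) ≤ (s + 1 - 2 * y) / (f - (s + 1)) := by
    rw [div_le_div_iff₀ (by linarith) hpos]; nlinarith
  have hrhs : (s + 1) / (f - (s + 1)) + (1 - 2 / (f - (s + 1))) * y
      = y + (s + 1 - 2 * y) / (f - (s + 1)) := by
    field_simp; ring
  linarith

lemma div_bProd_succ_le {f y z : ℝ} {s : ℕ} (hf : (s : ℝ) + 3 < f)
    (hz : z ≤ (s + 1) / (f - (s + 1)) + (1 - 2 / (f - (s + 1))) * y) :
    (z - abSum f (s + 1)) / bProd f (s + 1) ≤ (y - abSum f s) / bProd f s := by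
  have hb : 0 < 1 - 2 / (f - (s + 1)) := one_sub_two_div_pos (by linarith)
  have hB : 0 < bProd f s := bProd_pos (by linarith)
  calc (z - abSum f (s + 1)) / bProd f (s + 1)
      ≤ ((1 - 2 / (f - (s + 1))) * (y - abSum f s)) / ((1 - 2 / (f - (s + 1))) * bProd f s) := by
        rw [abSum_succ, bProd_succ]
        gcongr
        linarith
    _ = (y - abSum f s) / bProd f s := mul_div_mul_left _ _ hb.ne'

lemma le_self_of_succ_le_add_one {g : ℕ → ℕ} {m : ℕ} (h0 : g 0 = 0)
    (hstep : ∀ s < m, g (s + 1) ≤ g s + 1) : ∀ t ≤ m, g t ≤ t := by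
  intro t ht
  induction t with
  | zero => simp [h0]
  | succ t ih => linarith [hstep t ht, ih (by omega)]

section CondExp

variable {Ω : Type*} {m m₀ : MeasurableSpace Ω} {μ : Measure Ω}

lemma integrable_natCast_of_ae_le [IsFiniteMeasure μ] {g : Ω → ℕ} (hg : Measurable g) {C : ℕ}
    (hC : ∀ᵐ ω ∂μ, g ω ≤ C) : Integrable (fun ω => (g ω : ℝ)) μ :=
  Integrable.of_bound (measurable_from_top.comp hg).aestronglyMeasurable C <| by
    filter_upwards [hC] with ω hω
    simpa using hω

lemma condExp_sub_const_div [IsFiniteMeasure μ] (hm : m ≤ m₀) {X : Ω → ℝ}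
    (hX : Integrable X μ) (c k : ℝ) :
    μ[fun ω => (X ω - c) / k | m] =ᵐ[μ] fun ω => (μ[X | m] ω - c) / k := by
  have hfun : (fun ω => (X ω - c) / k) = k⁻¹ • (X - fun _ => c) := by
    ext ω; simp [div_eq_inv_mul]
  rw [hfun]
  filter_upwards [condExp_smul (m := m) (μ := μ) k⁻¹ (X - fun _ => c),
    condExp_sub (m := m) hX (integrable_const c)] with ω hsmul hsub
  simp [hsmul, hsub, condExp_const hm, div_eq_inv_mul]

lemma condExp_eq_add_condExp_sub [IsFiniteMeasure μ] (hm : m ≤ m₀) {X Y : Ω → ℝ}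
    (hX : Integrable X μ) (hY : Integrable Y μ) (hYm : StronglyMeasurable[m] Y) :
    μ[X | m] =ᵐ[μ] Y + μ[X - Y | m] := by
  conv_lhs => rw [← add_sub_cancel Y X]
  filter_upwards [condExp_add (m := m) hY (hX.sub hY)] with ω hω
  rw [hω, Pi.add_apply, condExp_of_stronglyMeasurable hm hYm hY, Pi.add_apply]

end CondExp

/-- The error process induces a supermartingale: if `(Ψ_s)_{s≤m}` is adapted,
`ℕ`-valued, starts at `0`, has increments in `{0,1}` a.s., and satisfies
`E[Ψ_{s+1} − Ψ_s | ℱ_s] ≤ (s − 2Ψ_s)/(f − s)` a.s. for `s < m`, then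
`E[M_{s+1} | ℱ_s] ≤ M_s` a.s. for every `s < m`. -/
theorem error_supermartingale {Ω : Type*} {m0 : MeasurableSpace Ω}
    (P : Measure Ω) [IsProbabilityMeasure P]
    (ℱ : Filtration ℕ m0) (m : ℕ) (f : ℝ) (hf : (m : ℝ) + 2 < f)
    (Ψ : ℕ → Ω → ℕ)
    (hadapted : ∀ s ≤ m, Measurable[ℱ s] (Ψ s))
    (h0 : ∀ ω, Ψ 0 ω = 0)
    (hstep : ∀ᵐ ω ∂P, ∀ s < m, Ψ (s + 1) ω = Ψ s ω ∨ Ψ (s + 1) ω = Ψ s ω + 1)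
    (hdrift : ∀ s < m, ∀ᵐ ω ∂P,
      (P[fun ω' => ((Ψ (s + 1) ω' : ℝ) - (Ψ s ω' : ℝ)) | ℱ s]) ω
        ≤ ((s : ℝ) - 2 * (Ψ s ω : ℝ)) / (f - (s : ℝ))) :
    ∀ s < m, ∀ᵐ ω ∂P, (P[Mproc f Ψ (s + 1) | ℱ s]) ω ≤ Mproc f Ψ s ω := by
  intro s hs
  have hfs : (s : ℝ) + 3 < f := by
    have : (s : ℝ) + 1 ≤ m := by exact_mod_cast hs
    linarith
  have hle : ∀ᵐ ω ∂P, ∀ t ≤ m, Ψ t ω ≤ t := by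
    filter_upwards [hstep] with ω hω
    exact le_self_of_succ_le_add_one (h0 ω) fun t ht => by rcases hω t ht with h | h <;> omega
  have hint : ∀ t ≤ m, Integrable (fun ω => (Ψ t ω : ℝ)) P := fun t ht =>
    integrable_natCast_of_ae_le ((hadapted t ht).mono (ℱ.le t) le_rfl) (hle.mono fun _ h => h t ht)
  have hinc : 0 ≤ᵐ[P] P[fun ω => (Ψ (s + 1) ω : ℝ) - Ψ s ω | ℱ s] := by
    refine condExp_nonneg ?_
    filter_upwards [hstep] with ω hω
    rcases hω s hs with h | h <;> simp [h]
  have hM : P[Mproc f Ψ (s + 1) | ℱ s] =ᵐ[P] fun ω =>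
      ((Ψ s ω : ℝ) + P[fun ω => (Ψ (s + 1) ω : ℝ) - Ψ s ω | ℱ s] ω - abSum f (s + 1)) /
        bProd f (s + 1) := by
    rw [Mproc_eq]
    filter_upwards [condExp_sub_const_div (ℱ.le s) (hint _ hs) (abSum f (s + 1)) (bProd f (s + 1)),
      condExp_eq_add_condExp_sub (ℱ.le s) (hint _ hs) (hint _ hs.le)
        (measurable_from_top.comp (hadapted s hs.le)).stronglyMeasurable] with ω h₁ h₂
    rw [h₁, h₂]
    rfl
  filter_upwards [hM, hdrift s hs, hinc] with ω hMω hdω hincω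
  rw [hMω]
  exact div_bProd_succ_le hfs (add_le_of_drift_le (by linarith) hincω hdω)
end
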